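/- McKean–Singer formula (finite-dimensional version): Let V and W be finite-dimensional complex inner product spaces and D : V → W linear with adjoint D*. Then for every t > 0, Tr(exp(−t·D*D)) − Tr(exp(−t·DD*)) = dim ker(D) − dim ker(D*). -/

import Mathlib

/-!
For `f : V → W` and `g : W → V`, expanding the exponential series gives
`Tr exp(gf) - Tr exp(fg) = ∑ₙ (Tr((gf)ⁿ) - Tr((fg)ⁿ)) / n!`, and for `n ≥ 1` cyclicity of the trace
gives `Tr((gf)ⁿ) = Tr(g (fg)ⁿ⁻¹ f) = Tr((fg)ⁿ)`; only the `n = 0` term `dim V - dim W` survives.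
Apply this to `f = D`, `g = -t D*`. Rank–nullity for `D` together with `ker D* = (range D)ᗮ`
turns `dim V - dim W` into `dim ker D - dim ker D*`.
-/

open NormedSpace
open scoped Nat

namespace LinearMap

variable {R M N : Type*} [CommRing R] [AddCommGroup M] [AddCommGroup N] [Module R M] [Module R N]

theorem comp_pow_succ (f : M →ₗ[R] N) (g : N →ₗ[R] M) (n : ℕ) :
    (g ∘ₗ f) ^ (n + 1) = g ∘ₗ ((f ∘ₗ g) ^ n) ∘ₗ f := by
  induction n with
  | zero => rfl
  | succ n ih =>
    rw [pow_succ, ih, pow_succ]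
    rfl

theorem trace_comp_pow_succ_comm [Module.Free R M] [Module.Finite R M] [Module.Free R N]
    [Module.Finite R N] (f : M →ₗ[R] N) (g : N →ₗ[R] M) (n : ℕ) :
    trace R M ((g ∘ₗ f) ^ (n + 1)) = trace R N ((f ∘ₗ g) ^ (n + 1)) := by
  rw [comp_pow_succ, trace_comp_comm', comp_assoc, ← Module.End.mul_eq_comp, ← pow_succ]

end LinearMap

section Exp

variable {𝕂 E F : Type*} [RCLike 𝕂] [NormedAddCommGroup E] [NormedSpace 𝕂 E]
  [FiniteDimensional 𝕂 E] [NormedAddCommGroup F] [NormedSpace 𝕂 F] [FiniteDimensional 𝕂 F]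

theorem hasSum_trace_exp (A : E →L[𝕂] E) :
    HasSum (fun n ↦ (n !⁻¹ : 𝕂) • LinearMap.trace 𝕂 E ↑(A ^ n)) (LinearMap.trace 𝕂 E ↑(exp A)) := by
  have := FiniteDimensional.complete 𝕂 (E →L[𝕂] E)
  let traceL : (E →L[𝕂] E) →L[𝕂] 𝕂 :=
    LinearMap.toContinuousLinearMap (LinearMap.trace 𝕂 E ∘ₗ ContinuousLinearMap.coeLM 𝕂)
  simpa [traceL] using (exp_series_hasSum_exp' (𝕂 := 𝕂) A).mapL traceL

theorem trace_exp_comp_sub_trace_exp_comp (f : E →L[𝕂] F) (g : F →L[𝕂] E) :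
    LinearMap.trace 𝕂 E ↑(exp (g ∘L f)) - LinearMap.trace 𝕂 F ↑(exp (f ∘L g)) =
      Module.finrank 𝕂 E - Module.finrank 𝕂 F := by
  have hdiff := (hasSum_trace_exp (g ∘L f)).sub (hasSum_trace_exp (f ∘L g))
  refine hdiff.unique (hasSum_single 0 fun n hn ↦ ?_) |>.trans ?_
  · obtain ⟨n, rfl⟩ := Nat.exists_eq_add_one_of_ne_zero hn
    simp only [ContinuousLinearMap.toLinearMap_pow, ContinuousLinearMap.toLinearMap_comp]
    rw [LinearMap.trace_comp_pow_succ_comm, sub_self]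
  · simp

end Exp

namespace LinearMap

variable {𝕜 E F : Type*} [RCLike 𝕜] [NormedAddCommGroup E] [InnerProductSpace 𝕜 E]
  [FiniteDimensional 𝕜 E] [NormedAddCommGroup F] [InnerProductSpace 𝕜 F] [FiniteDimensional 𝕜 F]

theorem finrank_add_finrank_ker_adjoint (T : E →ₗ[𝕜] F) :
    Module.finrank 𝕜 E + Module.finrank 𝕜 (ker (adjoint T)) =
      Module.finrank 𝕜 F + Module.finrank 𝕜 (ker T) := by
  have hE := finrank_range_add_finrank_ker T
  have hF := (range T).finrank_add_finrank_orthogonal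
  rw [orthogonal_range] at hF
  omega

end LinearMap

theorem mckean_singer_finite_dim_general
    {V W : Type*} [NormedAddCommGroup V] [InnerProductSpace ℂ V]
    [NormedAddCommGroup W] [InnerProductSpace ℂ W]
    [FiniteDimensional ℂ V] [FiniteDimensional ℂ W]
    (D : V →L[ℂ] W) (t : ℝ) :
    LinearMap.trace ℂ V ↑(exp ((-(t : ℂ)) • (ContinuousLinearMap.adjoint D ∘L D))) -
      LinearMap.trace ℂ W ↑(exp ((-(t : ℂ)) • (D ∘L ContinuousLinearMap.adjoint D))) =
    (Module.finrank ℂ (LinearMap.ker (D : V →ₗ[ℂ] W)) : ℂ) -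
      (Module.finrank ℂ (LinearMap.ker (ContinuousLinearMap.adjoint D : W →ₗ[ℂ] V)) : ℂ) := by
  rw [← ContinuousLinearMap.smul_comp, ← ContinuousLinearMap.comp_smul,
    trace_exp_comp_sub_trace_exp_comp, ← ContinuousLinearMap.adjoint_toLinearMap]
  have hdim : (_ : ℂ) = _ :=
    congrArg Nat.cast (LinearMap.finrank_add_finrank_ker_adjoint (D : V →ₗ[ℂ] W))
  push_cast at hdim
  linear_combination hdim

theorem mckean_singer_finite_dim
    {V W : Type*} [NormedAddCommGroup V] [InnerProductSpace ℂ V]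
    [NormedAddCommGroup W] [InnerProductSpace ℂ W]
    [FiniteDimensional ℂ V] [FiniteDimensional ℂ W]
    (D : V →L[ℂ] W) (t : ℝ) (ht : 0 < t) :
    LinearMap.trace ℂ V ↑(exp ((-(t : ℂ)) • (ContinuousLinearMap.adjoint D ∘L D))) -
      LinearMap.trace ℂ W ↑(exp ((-(t : ℂ)) • (D ∘L ContinuousLinearMap.adjoint D))) =
    (Module.finrank ℂ (LinearMap.ker (D : V →ₗ[ℂ] W)) : ℂ) -
      (Module.finrank ℂ (LinearMap.ker (ContinuousLinearMap.adjoint D : W →ₗ[ℂ] V)) : ℂ) :=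
  mckean_singer_finite_dim_general D t
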